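/- The normalizer of the subgroup R_D × {0} in the group G = (SL(2,ℂ) × SL(2,ℂ)) ⋊ ℤ/2ℤ equals the subgroup {(h, ε) ∈ G : h ∈ S, ε ∈ ℤ/2ℤ} (i.e. N_G(R_D) = S ⋊ ℤ/2ℤ). -/

import Mathlib

open Matrix

abbrev SL2 := Matrix.SpecialLinearGroup (Fin 2) ℂ

/-- The diagonal matrix `diag(t, t⁻¹)` as an element of `SL(2,ℂ)`. -/
def dmat (t : ℂˣ) : SL2 :=
  ⟨!![(t : ℂ), 0; 0, ((t⁻¹ : ℂˣ) : ℂ)], by simp [Matrix.det_fin_two_of]⟩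

lemma dmat_one : dmat 1 = 1 := by
  apply Subtype.ext
  simp only [dmat, Matrix.SpecialLinearGroup.coe_one, Matrix.one_fin_two]
  norm_num

lemma dmat_mul (s t : ℂˣ) : dmat (s * t) = dmat s * dmat t := by
  apply Subtype.ext
  rw [Matrix.SpecialLinearGroup.coe_mul]
  simp only [dmat, Matrix.mul_fin_two]
  rw [mul_inv]
  push_cast
  norm_num

lemma dmat_inv (t : ℂˣ) : (dmat t)⁻¹ = dmat t⁻¹ := by
  apply Subtype.ext
  rw [Matrix.SpecialLinearGroup.coe_inv]
  simp only [dmat, Matrix.adjugate_fin_two_of]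
  norm_num

/-- The torus `R_D = {(diag(t,t⁻¹), diag(t,t⁻¹)) : t ∈ ℂˣ}`. -/
def RD : Subgroup (SL2 × SL2) where
  carrier := {p | ∃ t : ℂˣ, p = (dmat t, dmat t)}
  one_mem' := ⟨1, by rw [dmat_one]; rfl⟩
  mul_mem' := by
    rintro a b ⟨s, rfl⟩ ⟨t, rfl⟩
    exact ⟨s * t, by rw [dmat_mul]; rfl⟩
  inv_mem' := by
    rintro a ⟨t, rfl⟩
    exact ⟨t⁻¹, by rw [← dmat_inv]; rfl⟩

/-- The subgroup `S` of `SL(2,ℂ) × SL(2,ℂ)` consisting of the pairs `(A,B)` with `A`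
and `B` both diagonal or both antidiagonal. -/
def Ssub : Subgroup (SL2 × SL2) where
  carrier := {p |
    ((p.1 : Matrix (Fin 2) (Fin 2) ℂ) 0 1 = 0 ∧ (p.1 : Matrix (Fin 2) (Fin 2) ℂ) 1 0 = 0 ∧
     (p.2 : Matrix (Fin 2) (Fin 2) ℂ) 0 1 = 0 ∧ (p.2 : Matrix (Fin 2) (Fin 2) ℂ) 1 0 = 0) ∨
    ((p.1 : Matrix (Fin 2) (Fin 2) ℂ) 0 0 = 0 ∧ (p.1 : Matrix (Fin 2) (Fin 2) ℂ) 1 1 = 0 ∧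
     (p.2 : Matrix (Fin 2) (Fin 2) ℂ) 0 0 = 0 ∧ (p.2 : Matrix (Fin 2) (Fin 2) ℂ) 1 1 = 0)}
  one_mem' := by
    left
    simp [Matrix.SpecialLinearGroup.coe_one, Matrix.one_apply]
  mul_mem' := by
    intro a b ha hb
    rcases ha with ⟨h1, h2, h3, h4⟩ | ⟨h1, h2, h3, h4⟩ <;>
      rcases hb with ⟨g1, g2, g3, g4⟩ | ⟨g1, g2, g3, g4⟩
    · left
      refine ⟨?_, ?_, ?_, ?_⟩ <;>
        simp [Prod.fst_mul, Prod.snd_mul, Matrix.mul_apply, Fin.sum_univ_two,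
          h1, h2, h3, h4, g1, g2, g3, g4]
    · right
      refine ⟨?_, ?_, ?_, ?_⟩ <;>
        simp [Prod.fst_mul, Prod.snd_mul, Matrix.mul_apply, Fin.sum_univ_two,
          h1, h2, h3, h4, g1, g2, g3, g4]
    · right
      refine ⟨?_, ?_, ?_, ?_⟩ <;>
        simp [Prod.fst_mul, Prod.snd_mul, Matrix.mul_apply, Fin.sum_univ_two,
          h1, h2, h3, h4, g1, g2, g3, g4]
    · left
      refine ⟨?_, ?_, ?_, ?_⟩ <;>
        simp [Prod.fst_mul, Prod.snd_mul, Matrix.mul_apply, Fin.sum_univ_two,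
          h1, h2, h3, h4, g1, g2, g3, g4]
  inv_mem' := by
    intro a ha
    rcases ha with ⟨h1, h2, h3, h4⟩ | ⟨h1, h2, h3, h4⟩
    · left
      refine ⟨?_, ?_, ?_, ?_⟩ <;>
        simp [Prod.fst_inv, Prod.snd_inv, Matrix.SpecialLinearGroup.coe_inv,
          Matrix.adjugate_fin_two, h1, h2, h3, h4]
    · right
      refine ⟨?_, ?_, ?_, ?_⟩ <;>
        simp [Prod.fst_inv, Prod.snd_inv, Matrix.SpecialLinearGroup.coe_inv,
          Matrix.adjugate_fin_two, h1, h2, h3, h4]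

/-- The swap automorphism of `SL(2,ℂ) × SL(2,ℂ)`. -/
def swapAut : MulAut (SL2 × SL2) := (MulEquiv.prodComm : (SL2 × SL2) ≃* (SL2 × SL2))

lemma swapAut_apply (p : SL2 × SL2) : swapAut p = p.swap := rfl

lemma swapAut_sq : swapAut * swapAut = 1 := by
  apply MulEquiv.ext
  intro x
  rw [MulAut.mul_apply, swapAut_apply, swapAut_apply, Prod.swap_swap]
  rfl

/-- The homomorphism `ℤ/2ℤ →* MulAut N` determined by an automorphism of order
dividing 2, sending the nontrivial element to that automorphism. -/
def hom2 {N : Type*} [Group N] (σ : MulAut N) (h : σ * σ = 1) :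
    Multiplicative (ZMod 2) →* MulAut N where
  toFun e := σ ^ (Multiplicative.toAdd e).val
  map_one' := by simp
  map_mul' a b := by
    have h2 : σ ^ 2 = 1 := by rw [pow_two]; exact h
    show σ ^ (Multiplicative.toAdd (a * b)).val = _
    rw [toAdd_mul, ZMod.val_add, ← pow_eq_pow_mod _ h2, pow_add]

/-- The group `G = (SL(2,ℂ) × SL(2,ℂ)) ⋊ ℤ/2ℤ`, the nontrivial element of `ℤ/2ℤ`
acting by swapping the two factors. -/
abbrev Ggrp := (SL2 × SL2) ⋊[hom2 swapAut swapAut_sq] Multiplicative (ZMod 2)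

lemma pow_swapAut_mem (K : Subgroup (SL2 × SL2)) (hswap : ∀ p ∈ K, Prod.swap p ∈ K) :
    ∀ (n : ℕ) (p : SL2 × SL2), p ∈ K → (swapAut ^ n) p ∈ K := by
  intro n
  induction n with
  | zero => intro p hp; simpa using hp
  | succ m ih =>
    intro p hp
    rw [pow_succ, MulAut.mul_apply]
    exact ih _ (by rw [swapAut_apply]; exact hswap p hp)

/-- For a swap-invariant subgroup `K` of `SL(2,ℂ) × SL(2,ℂ)`, the subgroup
`{(h, ε) ∈ G : h ∈ K, ε ∈ ℤ/2ℤ} = K ⋊ ℤ/2ℤ` of `G`. -/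
def liftSub (K : Subgroup (SL2 × SL2)) (hswap : ∀ p ∈ K, Prod.swap p ∈ K) :
    Subgroup Ggrp where
  carrier := {x | x.left ∈ K}
  one_mem' := by
    show (1 : Ggrp).left ∈ K
    rw [SemidirectProduct.one_left]
    exact K.one_mem
  mul_mem' := by
    intro a b ha hb
    show (a * b).left ∈ K
    rw [SemidirectProduct.mul_left]
    exact K.mul_mem ha (pow_swapAut_mem K hswap _ _ hb)
  inv_mem' := by
    intro a ha
    show a⁻¹.left ∈ K
    rw [SemidirectProduct.inv_left]
    exact pow_swapAut_mem K hswap _ _ (K.inv_mem ha)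

lemma Ssub_swap_invariant : ∀ p ∈ Ssub, Prod.swap p ∈ Ssub := by
  intro p hp
  rcases hp with ⟨h1, h2, h3, h4⟩ | ⟨h1, h2, h3, h4⟩
  · exact Or.inl ⟨h3, h4, h1, h2⟩
  · exact Or.inr ⟨h3, h4, h1, h2⟩

/-! The swap fixes every element of `R_D`, so `ℤ/2ℤ` centralises `R_D × {1}` and an element of
`G` normalises it exactly when its `SL(2,ℂ)²`-component normalises `R_D`. If `A ∈ SL(2,ℂ)`
conjugates `diag(t, t⁻¹)` with `t ≠ t⁻¹` into the diagonal torus, comparing entries of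
`A · diag(t, t⁻¹) = diag(s, s⁻¹) · A` shows that `A` is diagonal (and `s = t`) or antidiagonal
(and `s = t⁻¹`). For `t = 2` the two components of a normalising pair share `s`, so they are
both diagonal or both antidiagonal; conversely such pairs conjugate `(diag(t,t⁻¹), diag(t,t⁻¹))`
to itself or to its inverse. -/

open Subgroup SemidirectProduct in
theorem SemidirectProduct.mem_normalizer_map_inl_iff {N G : Type*} [Group N] [Group G]
    {φ : G →* MulAut N} {H : Subgroup N} (hH : ∀ g, ∀ n ∈ H, φ g n = n) (x : N ⋊[φ] G) :
    x ∈ normalizer (H.map (inl : N →* N ⋊[φ] G) : Set (N ⋊[φ] G)) ↔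
      x.left ∈ normalizer (H : Set N) := by
  have hinr : inr x.right ∈ normalizer (H.map (inl : N →* N ⋊[φ] G) : Set (N ⋊[φ] G)) := by
    refine centralizer_le_normalizer _ (mem_centralizer_iff.2 ?_)
    rintro _ ⟨n, hn, rfl⟩
    rw [eq_comm, ← mul_inv_eq_iff_eq_mul, ← map_inv, ← inl_aut, hH _ _ hn]
  conv_lhs => rw [← inl_left_mul_inr_right x]
  rw [mul_mem_cancel_right hinr, ← mem_comap, comap_normalizer_eq_of_le_range (map_le_range _ _),
    comap_map_eq_self_of_injective inl_injective]

section DmatConjugation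

open Matrix.SpecialLinearGroup

variable (A : SL2) (t : ℂˣ)

theorem conj_dmat_of_diag (h01 : A 0 1 = 0) (h10 : A 1 0 = 0) : A * dmat t * A⁻¹ = dmat t := by
  rw [mul_inv_eq_iff_eq_mul]
  ext i j
  rw [coe_mul, coe_mul]
  fin_cases i <;> fin_cases j <;> simp [dmat, Matrix.mul_apply, h01, h10, mul_comm]

theorem conj_dmat_of_antidiag (h00 : A 0 0 = 0) (h11 : A 1 1 = 0) :
    A * dmat t * A⁻¹ = dmat t⁻¹ := by
  rw [mul_inv_eq_iff_eq_mul]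
  ext i j
  rw [coe_mul, coe_mul]
  fin_cases i <;> fin_cases j <;> simp [dmat, Matrix.mul_apply, h00, h11, mul_comm]

theorem diag_or_antidiag_of_conj_dmat {s : ℂˣ} (ht : t ≠ t⁻¹) (h : A * dmat t * A⁻¹ = dmat s) :
    (A 0 1 = 0 ∧ A 1 0 = 0 ∧ s = t) ∨ (A 0 0 = 0 ∧ A 1 1 = 0 ∧ s = t⁻¹) := by
  have hm : (A : Matrix (Fin 2) (Fin 2) ℂ) * dmat t = dmat s * A := by
    rw [← coe_mul, ← coe_mul, ← mul_inv_eq_iff_eq_mul.mp h]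
  have e00 := congrFun₂ hm 0 0
  have e01 := congrFun₂ hm 0 1
  have e10 := congrFun₂ hm 1 0
  have e11 := congrFun₂ hm 1 1
  simp only [dmat, Units.val_inv_eq_inv_val, Fin.isValue, Matrix.mul_apply, of_apply, cons_val',
    cons_val_zero, cons_val_fin_one, Fin.sum_univ_two, cons_val_one, mul_zero, add_zero, zero_mul,
    zero_add] at e00 e01 e10 e11
  have hdet : A 0 0 * A 1 1 - A 0 1 * A 1 0 = 1 := by
    rw [← Matrix.det_fin_two]; exact A.det_coe
  have htc : (t : ℂ)⁻¹ - t ≠ 0 := by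
    rw [sub_ne_zero, ← Units.val_inv_eq_inv_val, Ne, Units.val_inj]
    exact ht.symm
  by_cases ha : A 0 0 = 0
  · right
    have hb : A 0 1 ≠ 0 := by
      rintro hb
      simp [ha, hb] at hdet
    have hs : (s : ℂ) = (t : ℂ)⁻¹ := mul_left_cancel₀ hb (by linear_combination -e01)
    have hd : A 1 1 * ((t : ℂ)⁻¹ - t) = 0 := by
      rw [hs, inv_inv] at e11
      linear_combination e11
    exact ⟨ha, (mul_eq_zero.1 hd).resolve_right htc,
      Units.ext (by rw [hs, Units.val_inv_eq_inv_val])⟩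
  · left
    have hs : (s : ℂ) = t := mul_left_cancel₀ ha (by linear_combination -e00)
    rw [hs] at e01 e10
    have hb : A 0 1 * ((t : ℂ)⁻¹ - t) = 0 := by linear_combination e01
    have hc : A 1 0 * ((t : ℂ)⁻¹ - t) = 0 := by linear_combination -e10
    exact ⟨(mul_eq_zero.1 hb).resolve_right htc, (mul_eq_zero.1 hc).resolve_right htc,
      Units.ext hs⟩

end DmatConjugation

theorem hom2_apply_eq_self {N : Type*} [Group N] {σ : MulAut N} (h : σ * σ = 1) {p : N}
    (hp : σ p = p) (e : Multiplicative (ZMod 2)) : hom2 σ h e p = p :=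
  (MulAction.stabilizer (MulAut N) p).pow_mem hp _

theorem normalizer_RD_eq_Ssub : Subgroup.normalizer (RD : Set (SL2 × SL2)) = Ssub := by
  apply le_antisymm
  · intro x hx
    set t := Units.mk0 (2 : ℂ) two_ne_zero
    have ht : t ≠ t⁻¹ := by
      intro h
      have := congrArg Units.val h
      norm_num [t] at this
    obtain ⟨s, hs⟩ : x * (dmat t, dmat t) * x⁻¹ ∈ RD := (hx _).1 ⟨t, rfl⟩
    rcases diag_or_antidiag_of_conj_dmat x.1 t ht (congrArg Prod.fst hs) with
      ⟨a01, a10, rfl⟩ | ⟨a00, a11, rfl⟩ <;>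
    rcases diag_or_antidiag_of_conj_dmat x.2 t ht (congrArg Prod.snd hs) with
      ⟨b01, b10, hs'⟩ | ⟨b00, b11, hs'⟩
    · exact Or.inl ⟨a01, a10, b01, b10⟩
    · exact absurd hs' ht
    · exact absurd hs'.symm ht
    · exact Or.inr ⟨a00, a11, b00, b11⟩
  · rw [Subgroup.le_normalizer_iff]
    rintro x (⟨a01, a10, b01, b10⟩ | ⟨a00, a11, b00, b11⟩) _ ⟨t, rfl⟩
    · exact ⟨t, Prod.ext (conj_dmat_of_diag _ t a01 a10) (conj_dmat_of_diag _ t b01 b10)⟩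
    · exact ⟨t⁻¹,
        Prod.ext (conj_dmat_of_antidiag _ t a00 a11) (conj_dmat_of_antidiag _ t b00 b11)⟩

/-- **Proposition 4.6(ii).** The normalizer of `R_D × {0}` in
`G = (SL(2,ℂ) × SL(2,ℂ)) ⋊ ℤ/2ℤ` equals the subgroup
`S ⋊ ℤ/2ℤ = {(h, ε) ∈ G : h ∈ S}`. -/
theorem normalizer_RD_eq_S_semidirect :
    Subgroup.normalizer ((RD.map (SemidirectProduct.inl : (SL2 × SL2) →* Ggrp)) : Set Ggrp)
      = liftSub Ssub Ssub_swap_invariant := by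
  have hfix : ∀ e, ∀ p ∈ RD, hom2 swapAut swapAut_sq e p = p := by
    rintro e _ ⟨t, rfl⟩
    exact hom2_apply_eq_self swapAut_sq rfl e
  ext x
  rw [SemidirectProduct.mem_normalizer_map_inl_iff hfix, normalizer_RD_eq_Ssub]
  rfl
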